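/- arXiv:2511.03872 — 2 statements merged into one kernel-verified Lean document; each statement's English description precedes it below -/
import Mathlib

section
/- For all a, z ∈ 𝔻 \ {0} with a ≠ z, the series ∑_{k=-∞}^{∞} log |((log z + 2πik) + \overline{log a}) / ((log z + 2πik) - log a)| converges absolutely and equals log |(1 - \bar{a} z)/(a - z)|, where log denotes any fixed branch of the complex logarithm (the sum is independent of the chosen branches). -/
/-!
Put `u = log z + conj (log a)` and `v = log z - log a`, so that `exp u = conj a * z` and
`exp v = z / a`. Pairing the terms `k` and `-k` and evaluating Euler's product for `sin` at an
imaginary point gives the symmetric product `∏ₖ (u + 2πik) / (v + 2πik) = sinh (u/2) / sinh (v/2)`,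
whose modulus is `|exp u - 1| / |exp v - 1| · exp ((Re v - Re u) / 2) = |1 - conj a z| / |a - z|`.
Since `u` and `v` have the same imaginary part, `|u + 2πik|² - |v + 2πik|²` does not depend on `k`,
so the `k`-th term is `O(1/k²)`; the series therefore converges absolutely, and its sum is the
logarithm of the modulus of the symmetric product.
-/

open Complex ComplexConjugate Metric Set Filter Topology

lemma Finset.prod_Icc_neg_eq_mul_prod_range {M : Type*} [CommMonoid M] (f : ℤ → M) (n : ℕ) :
    ∏ k ∈ Finset.Icc (-(n : ℤ)) n, f k =
      f 0 * ∏ j ∈ Finset.range n, (f (j + 1) * f (-(j + 1))) := by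
  induction n with
  | zero => simp
  | succ n ih =>
    rw [Nat.cast_succ, Finset.Icc_succ_succ, Finset.prod_union (by simp),
      Finset.prod_pair (by omega), ih, Finset.prod_range_succ, mul_comm (f (-(n + 1)))]
    ac_rfl

lemma Real.abs_log_div_le_of_le {p q m : ℝ} (hm : 0 < m) (hp : m ≤ p) (hq : m ≤ q) :
    |Real.log (p / q)| ≤ |p - q| / m := by
  have hp0 : 0 < p := hm.trans_le hp
  have hq0 : 0 < q := hm.trans_le hq
  have hpq : 0 < p / q := div_pos hp0 hq0
  rw [abs_le]
  constructor
  · calc -(|p - q| / m) ≤ -(|p - q| / p) :=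
          neg_le_neg (div_le_div_of_nonneg_left (abs_nonneg _) hm hp)
      _ ≤ (p - q) / p := by rw [← neg_div]; exact div_le_div_of_nonneg_right (neg_abs_le _) hp0.le
      _ = 1 - (p / q)⁻¹ := by field_simp
      _ ≤ Real.log (p / q) := Real.one_sub_inv_le_log_of_pos hpq
  · calc Real.log (p / q) ≤ p / q - 1 := Real.log_le_sub_one_of_pos hpq
      _ = (p - q) / q := by field_simp
      _ ≤ |p - q| / q := div_le_div_of_nonneg_right (le_abs_self _) hq0.le
      _ ≤ |p - q| / m := div_le_div_of_nonneg_left (abs_nonneg _) hm hq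

lemma tsum_log_norm_eq_log_norm_of_hasProd {β 𝕜 : Type*} [NormedField 𝕜] {L : SummationFilter β}
    [L.LeAtTop] [L.NeBot] {F : β → 𝕜} {P : 𝕜} (hF : ∀ k, F k ≠ 0) (hP : P ≠ 0)
    (hprod : HasProd F P L) (hsum : Summable fun k ↦ Real.log ‖F k‖) :
    ∑' k, Real.log ‖F k‖ = Real.log ‖P‖ := by
  have hcont : ContinuousAt (fun x : 𝕜 ↦ Real.log ‖x‖) P :=
    (Real.continuousAt_log (norm_ne_zero_iff.mpr hP)).comp continuous_norm.continuousAt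
  have hL : HasSum (fun k ↦ Real.log ‖F k‖) (Real.log ‖P‖) L :=
    (hcont.tendsto.comp hprod).congr fun s ↦ by
      simp [norm_prod, Real.log_prod fun k _ ↦ norm_ne_zero_iff.mpr (hF k)]
  rw [← tsum_eq_of_summable_unconditional (L := L) hsum, hL.tsum_eq]

namespace Complex

open Real

lemma exp_add_two_pi_mul_I (w : ℂ) (k : ℤ) : exp (w + 2 * π * k * I) = exp w := by
  rw [show (2 * π * k * I : ℂ) = k * (2 * π * I) by ring]
  exact exp_periodic.int_mul k w

lemma add_two_pi_mul_I_ne_zero {w : ℂ} (hw : exp w ≠ 1) (k : ℤ) : w + 2 * π * k * I ≠ 0 := by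
  intro h
  apply hw
  rw [← exp_add_two_pi_mul_I w k, h, exp_zero]

lemma sinh_half_eq (w : ℂ) : sinh (w / 2) = exp (-(w / 2)) * (exp w - 1) / 2 := by
  rw [sinh, mul_sub, ← exp_add, mul_one]
  ring_nf

lemma sinh_half_ne_zero {w : ℂ} (hw : exp w ≠ 1) : sinh (w / 2) ≠ 0 := by
  rw [sinh_half_eq]
  exact div_ne_zero (mul_ne_zero (exp_ne_zero _) (sub_ne_zero.mpr hw)) two_ne_zero

lemma norm_sinh_half_div_sinh_half (u v : ℂ) :
    ‖sinh (u / 2) / sinh (v / 2)‖ = ‖exp u - 1‖ / ‖exp v - 1‖ * Real.exp ((v.re - u.re) / 2) := by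
  have hexp : ‖exp (-(u / 2))‖ / ‖exp (-(v / 2))‖ = Real.exp ((v.re - u.re) / 2) := by
    rw [norm_exp, norm_exp, ← Real.exp_sub]
    congr 1
    simp only [neg_re, div_ofNat_re]
    ring
  rw [sinh_half_eq, sinh_half_eq, ← hexp]
  simp only [norm_div, norm_mul]
  field_simp

lemma norm_sinh_half_div_sinh_half_of_exp_eq {a z la lz : ℂ} (hla : exp la = a) (hlz : exp lz = z) :
    ‖sinh ((lz + conj la) / 2) / sinh ((lz - la) / 2)‖ = ‖(1 - conj a * z) / (a - z)‖ := by
  have ha0 : a ≠ 0 := hla ▸ exp_ne_zero la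
  have hre : Real.exp (((lz - la).re - (lz + conj la).re) / 2) = ‖a‖⁻¹ := by
    rw [← hla, norm_exp, ← Real.exp_neg]
    congr 1
    simp only [add_re, sub_re, conj_re]
    ring
  rw [norm_sinh_half_div_sinh_half, hre, exp_add, exp_conj, exp_sub, hla, hlz, div_sub_one ha0,
    mul_comm z, norm_div, norm_div, norm_sub_rev (_ * z), norm_sub_rev z]
  field_simp

lemma tendsto_euler_sinh_prod (u : ℂ) :
    Tendsto (fun n : ℕ ↦ u / 2 * ∏ j ∈ Finset.range n, (1 + (u / (2 * π * (j + 1))) ^ 2))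
      atTop (𝓝 (sinh (u / 2))) := by
  have hπ : (π : ℂ) ≠ 0 := ofReal_ne_zero.mpr pi_ne_zero
  -- Euler's product for `sin (π x)` at the imaginary point `x = u I / (2π)`.
  have h := (tendsto_euler_sin_prod (u * I / (2 * π))).div_const I
  rw [show (π : ℂ) * (u * I / (2 * π)) = u / 2 * I by field_simp, sin_mul_I,
    mul_div_cancel_right₀ _ I_ne_zero] at h
  refine h.congr fun n ↦ ?_
  rw [mul_right_comm, mul_div_cancel_right₀ _ I_ne_zero]
  refine congrArg _ (Finset.prod_congr rfl fun j _ ↦ ?_)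
  have hj : (j : ℂ) + 1 ≠ 0 := by exact_mod_cast Nat.succ_ne_zero j
  field_simp
  linear_combination (-u ^ 2) * I_sq

lemma add_mul_I_div_mul_sub_mul_I_div (u v : ℂ) {t : ℂ} (ht : t ≠ 0) :
    (u + t * I) / (v + t * I) * ((u - t * I) / (v - t * I)) =
      (1 + (u / t) ^ 2) / (1 + (v / t) ^ 2) := by
  have hpair (w : ℂ) : (w + t * I) * (w - t * I) = t ^ 2 * (1 + (w / t) ^ 2) := by
    field_simp
    linear_combination (-t ^ 2) * I_sq
  rw [div_mul_div_comm, hpair, hpair, mul_div_mul_left _ _ (pow_ne_zero 2 ht)]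

lemma hasProd_symmetricIcc_add_two_pi_mul_I_div (u v : ℂ) (hv : sinh (v / 2) ≠ 0) :
    HasProd (fun k : ℤ ↦ (u + 2 * π * k * I) / (v + 2 * π * k * I)) (sinh (u / 2) / sinh (v / 2))
      (SummationFilter.symmetricIcc ℤ) := by
  rw [SummationFilter.hasProd_symmetricIcc_iff]
  refine ((tendsto_euler_sinh_prod u).div (tendsto_euler_sinh_prod v) hv).congr fun n ↦ ?_
  rw [Pi.div_apply, Finset.prod_Icc_neg_eq_mul_prod_range, mul_div_mul_comm,
    ← Finset.prod_div_distrib]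
  congr 1
  · simpa using div_div_div_cancel_right₀ (two_ne_zero' ℂ) u v
  · refine Finset.prod_congr rfl fun j _ ↦ ?_
    have ht : 2 * (π : ℂ) * (j + 1) ≠ 0 := by
      have : (j : ℂ) + 1 ≠ 0 := by exact_mod_cast Nat.succ_ne_zero j
      simp [pi_ne_zero, this]
    rw [← add_mul_I_div_mul_sub_mul_I_div u v ht]
    push_cast
    ring_nf

lemma normSq_add_two_pi_mul_I (u : ℂ) (k : ℤ) :
    normSq (u + 2 * π * k * I) = u.re ^ 2 + (2 * π) ^ 2 * (k + u.im / (2 * π)) ^ 2 := by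
  have : (2 * π) * (k + u.im / (2 * π)) = u.im + 2 * π * k := by field_simp; ring
  rw [← mul_pow, this, normSq_apply]
  simp only [add_re, add_im, mul_re, mul_im, ofReal_re, ofReal_im, intCast_re, intCast_im, I_re,
    I_im, re_ofNat, im_ofNat]
  ring

lemma summable_abs_log_norm_add_two_pi_mul_I_div {u v : ℂ} (h : u.im = v.im) :
    Summable (fun k : ℤ ↦ |Real.log ‖(u + 2 * π * k * I) / (v + 2 * π * k * I)‖|) := by
  -- `‖u + 2πkI‖²` and `‖v + 2πkI‖²` differ by `u.re ^ 2 - v.re ^ 2` and are both at least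
  -- `(2π)²(k + c)²`, which vanishes for at most one `k`.
  set c := u.im / (2 * π)
  refine Summable.of_norm_bounded_eventually (((summable_one_div_int_add_rpow c 2).mpr
    one_lt_two).mul_left (|u.re ^ 2 - v.re ^ 2| / (2 * (2 * π) ^ 2))) ?_
  have hexc : {k : ℤ | (k : ℝ) + c = 0}.Finite :=
    Set.Subsingleton.finite fun k hk l hl ↦ Int.cast_injective (add_right_cancel (hk.trans hl.symm))
  filter_upwards [hexc.eventually_cofinite_notMem] with k hkc
  have hm : 0 < (2 * π) ^ 2 * ((k : ℝ) + c) ^ 2 := mul_pos (by positivity) (sq_pos_of_ne_zero hkc)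
  have hlog : Real.log ‖(u + 2 * π * k * I) / (v + 2 * π * k * I)‖
      = Real.log (normSq (u + 2 * π * k * I) / normSq (v + 2 * π * k * I)) / 2 := by
    rw [← Complex.sq_norm, ← Complex.sq_norm, ← div_pow, ← norm_div, Real.log_pow]
    ring
  rw [Real.norm_eq_abs, abs_abs, hlog, abs_div, abs_two, normSq_add_two_pi_mul_I,
    normSq_add_two_pi_mul_I, ← h]
  calc _ ≤ |u.re ^ 2 - v.re ^ 2| / ((2 * π) ^ 2 * ((k : ℝ) + c) ^ 2) / 2 := by
        gcongr
        refine (Real.abs_log_div_le_of_le hm (le_add_of_nonneg_left (sq_nonneg _))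
          (le_add_of_nonneg_left (sq_nonneg _))).trans_eq ?_
        rw [add_sub_add_right_eq_sub]
    _ = _ := by
        rw [Real.rpow_two, sq_abs]
        field_simp

end Complex

theorem green_series_disk_general
    (a z : ℂ) (ha : a ∈ ball (0:ℂ) 1)
    (hz : z ∈ ball (0:ℂ) 1) (hne : a ≠ z)
    (la lz : ℂ) (hla : Complex.exp la = a) (hlz : Complex.exp lz = z) :
    Summable (fun k : ℤ =>
      |Real.log ‖((lz + 2*Real.pi*(k:ℂ)*Complex.I) + (starRingEnd ℂ) la) /
        ((lz + 2*Real.pi*(k:ℂ)*Complex.I) - la)‖|) ∧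
    ∑' k : ℤ,
      Real.log ‖((lz + 2*Real.pi*(k:ℂ)*Complex.I) + (starRingEnd ℂ) la) /
        ((lz + 2*Real.pi*(k:ℂ)*Complex.I) - la)‖
      = Real.log ‖(1 - (starRingEnd ℂ) a * z) / (a - z)‖ := by
  set u := lz + conj la
  set v := lz - la
  have hu : exp u ≠ 1 := by
    rw [exp_add, exp_conj, hla, hlz, mul_comm]
    refine ne_of_apply_ne norm (ne_of_lt ?_)
    rw [norm_mul, RCLike.norm_conj, norm_one]
    exact mul_lt_one_of_nonneg_of_lt_one_left (norm_nonneg a) (mem_ball_zero_iff.mp ha)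
      (mem_ball_zero_iff.mp hz).le
  have hv : exp v ≠ 1 := by
    rw [exp_sub, hlz, hla]
    exact fun h ↦ hne ((div_eq_one_iff_eq (hla ▸ exp_ne_zero la)).mp h).symm
  have hterm (k : ℤ) : (lz + 2 * Real.pi * k * I + conj la) / (lz + 2 * Real.pi * k * I - la)
      = (u + 2 * Real.pi * k * I) / (v + 2 * Real.pi * k * I) := by
    congr 1 <;> ring
  simp only [hterm]
  have hsum := summable_abs_log_norm_add_two_pi_mul_I_div (u := u) (v := v)
    (by simp [u, v, sub_eq_add_neg])
  refine ⟨hsum, ?_⟩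
  rw [tsum_log_norm_eq_log_norm_of_hasProd
    (fun k ↦ div_ne_zero (add_two_pi_mul_I_ne_zero hu k) (add_two_pi_mul_I_ne_zero hv k))
    (div_ne_zero (sinh_half_ne_zero hu) (sinh_half_ne_zero hv))
    (hasProd_symmetricIcc_add_two_pi_mul_I_div u v (sinh_half_ne_zero hv)) hsum.of_abs,
    norm_sinh_half_div_sinh_half_of_exp_eq hla hlz]

/-- for `a, z` in the punctured unit disk with `a ≠ z`, and any
choices `la, lz` of logarithms of `a` and `z`, the bilateral series
`∑_{k∈ℤ} log |((log z + 2πik) + conj (log a)) / ((log z + 2πik) - log a)|`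
converges absolutely and equals `log |(1 - \bar a z)/(a - z)|`. -/
theorem green_series_disk
    (a z : ℂ) (ha : a ∈ ball (0:ℂ) 1) (ha0 : a ≠ 0)
    (hz : z ∈ ball (0:ℂ) 1) (hz0 : z ≠ 0) (hne : a ≠ z)
    (la lz : ℂ) (hla : Complex.exp la = a) (hlz : Complex.exp lz = z) :
    Summable (fun k : ℤ =>
      |Real.log ‖((lz + 2*Real.pi*(k:ℂ)*Complex.I) + (starRingEnd ℂ) la) /
        ((lz + 2*Real.pi*(k:ℂ)*Complex.I) - la)‖|) ∧
    ∑' k : ℤ,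
      Real.log ‖((lz + 2*Real.pi*(k:ℂ)*Complex.I) + (starRingEnd ℂ) la) /
        ((lz + 2*Real.pi*(k:ℂ)*Complex.I) - la)‖
      = Real.log ‖(1 - (starRingEnd ℂ) a * z) / (a - z)‖ :=
  green_series_disk_general a z ha hz hne la lz hla hlz
end

section
/- Fix a ∈ (0,1) with log a real, and define G(z) = log|(log z + log a)/(log z - log a)| + ∑_{k=1}^{∞} log|((log z + log a)² + 4π²k²)/((log z - log a)² + 4π²k²)| for z ∈ 𝔻 \ {0}, where log z = ln|z| + i Arg z. Then G remains bounded as z → 0; consequently G extends to a harmonic function on all of 𝔻. -/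
open Complex Metric Set Filter Topology

/-- A function is harmonic on `s` if it is continuous on `s` and satisfies the
mean-value equality on every closed disk contained in `s`. -/
def HarmonicOn (u : ℂ → ℝ) (s : Set ℂ) : Prop :=
  ContinuousOn u s ∧
    ∀ c ∈ s, ∀ R : ℝ, 0 < R → closedBall c R ⊆ s →
      u c = (1/(2*Real.pi)) * ∫ θ in (0:ℝ)..(2*Real.pi),
        u (c + (R:ℂ) * Complex.exp (θ * Complex.I))

/-- The series expression for the Green's function of the punctured disk, for a
pole at a real point `a ∈ (0,1)`; here `log z` is the principal logarithm. -/
noncomputable def greenSeries (a : ℝ) (z : ℂ) : ℝ :=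
  Real.log ‖(Complex.log z + (Real.log a : ℂ)) / (Complex.log z - (Real.log a : ℂ))‖ +
    ∑' k : ℕ,
      Real.log ‖((Complex.log z + (Real.log a : ℂ))^2 + 4*Real.pi^2*((k:ℂ)+1)^2) /
        ((Complex.log z - (Real.log a : ℂ))^2 + 4*Real.pi^2*((k:ℂ)+1)^2)‖

/-!
The series has a closed form. With `u = log z + log a` and `v = log z - log a`, Euler's product
`sinh (t/2) = (t/2) ∏_{k ≥ 1} (1 + t² / (4π²k²))` turns
`log |u/v| + ∑ log |(u² + 4π²k²) / (v² + 4π²k²)|` into `log |sinh (u/2) / sinh (v/2)|`, and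
multiplying numerator and denominator by `2 e^{u/2}` gives `G z = log |(a z - 1) / (z - a)|`.
This is `log |f|` for a Möbius map `f` that is holomorphic and zero-free on `𝔻 \ {a}`, hence
harmonic there, and in particular continuous, so bounded, at `0`.
-/

open Real

noncomputable def sinhFactor (t : ℂ) (k : ℕ) : ℂ := 1 + t ^ 2 / (4 * π ^ 2 * (k + 1) ^ 2)

theorem ne_zero_of_sinh_half_ne_zero {t : ℂ} (h : Complex.sinh (t / 2) ≠ 0) : t ≠ 0 := by
  rintro rfl
  simp at h

theorem tendsto_prod_sinhFactor {t : ℂ} (ht : t ≠ 0) :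
    Tendsto (fun n ↦ ∏ k ∈ Finset.range n, sinhFactor t k) atTop
      (𝓝 (Complex.sinh (t / 2) / (t / 2))) := by
  have hπ : (π : ℂ) ≠ 0 := ofReal_ne_zero.2 pi_ne_zero
  have h := tendsto_euler_sin_prod' (x := t * I / (2 * π)) (by simp [ht, hπ])
  have harg : (π : ℂ) * (t * I / (2 * π)) = t / 2 * I := by field_simp
  rw [harg, Complex.sin_mul_I, mul_div_mul_right _ _ I_ne_zero] at h
  refine h.congr fun n ↦ Finset.prod_congr rfl fun k _ ↦ ?_
  simp only [sineTerm, sinhFactor]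
  field_simp
  ring_nf
  simp [I_sq]

theorem sinhFactor_ne_zero {t : ℂ} (h : Complex.sinh (t / 2) ≠ 0) (k : ℕ) :
    sinhFactor t k ≠ 0 := by
  intro hk
  have ht := ne_zero_of_sinh_half_ne_zero h
  have hzero : ∀ᶠ n in atTop, ∏ j ∈ Finset.range n, sinhFactor t j = 0 :=
    (eventually_gt_atTop k).mono fun n hn ↦ Finset.prod_eq_zero (Finset.mem_range.2 hn) hk
  have hlim := tendsto_nhds_unique (tendsto_prod_sinhFactor ht)
    (tendsto_const_nhds.congr' (EventuallyEq.symm hzero))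
  simp [ht, h] at hlim

theorem hasSum_log_norm_sinhFactor {t : ℂ} (h : Complex.sinh (t / 2) ≠ 0) :
    HasSum (fun k ↦ Real.log ‖sinhFactor t k‖) (Real.log ‖Complex.sinh (t / 2) / (t / 2)‖) := by
  have ht := ne_zero_of_sinh_half_ne_zero h
  have hsum : Summable fun k ↦ Real.log ‖sinhFactor t k‖ := by
    refine Summable.summable_log_norm_one_add
      (f := fun k : ℕ ↦ t ^ 2 / (4 * π ^ 2 * (k + 1) ^ 2)) ?_
    have := summable_pow_div_add (t ^ 2 / (4 * π ^ 2)) 2 1 one_lt_two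
    simpa [div_div] using this
  refine hsum.hasSum_iff_tendsto_nat.2 ?_
  refine ((tendsto_prod_sinhFactor ht).norm.log (by simpa [ht] using h)).congr fun n ↦ ?_
  rw [norm_prod, Real.log_prod fun k _ ↦ norm_ne_zero_iff.2 (sinhFactor_ne_zero h k)]

theorem log_norm_div_add_tsum_eq_log_norm_sinh_div {u v : ℂ} (hu : Complex.sinh (u / 2) ≠ 0)
    (hv : Complex.sinh (v / 2) ≠ 0) :
    Real.log ‖u / v‖ + ∑' k : ℕ, Real.log ‖(u ^ 2 + 4 * π ^ 2 * ((k : ℂ) + 1) ^ 2) /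
        (v ^ 2 + 4 * π ^ 2 * ((k : ℂ) + 1) ^ 2)‖ =
      Real.log ‖Complex.sinh (u / 2) / Complex.sinh (v / 2)‖ := by
  have hterm (k : ℕ) : Real.log ‖(u ^ 2 + 4 * π ^ 2 * ((k : ℂ) + 1) ^ 2) /
      (v ^ 2 + 4 * π ^ 2 * ((k : ℂ) + 1) ^ 2)‖ =
        Real.log ‖sinhFactor u k‖ - Real.log ‖sinhFactor v k‖ := by
    have hc : (4 * π ^ 2 * ((k : ℂ) + 1) ^ 2) ≠ 0 := by
      simp [pi_ne_zero, Nat.cast_add_one_ne_zero]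
    rw [← Real.log_div (norm_ne_zero_iff.2 (sinhFactor_ne_zero hu k))
      (norm_ne_zero_iff.2 (sinhFactor_ne_zero hv k)), ← norm_div, sinhFactor, sinhFactor]
    congr 2
    field_simp
    ring
  rw [tsum_congr hterm,
    ((hasSum_log_norm_sinhFactor hu).sub (hasSum_log_norm_sinhFactor hv)).tsum_eq]
  have hu0 := ne_zero_of_sinh_half_ne_zero hu
  have hv0 := ne_zero_of_sinh_half_ne_zero hv
  have hsplit : Complex.sinh (u / 2) / Complex.sinh (v / 2) =
      u / v * (Complex.sinh (u / 2) / (u / 2)) / (Complex.sinh (v / 2) / (v / 2)) := by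
    field_simp
  rw [hsplit, norm_div _ (Complex.sinh (v / 2) / (v / 2)), norm_mul, Real.log_div, Real.log_mul,
    add_sub_assoc] <;> simp [*]

theorem two_mul_sinh_mul_exp (x y : ℂ) :
    2 * Complex.sinh x * Complex.exp y = Complex.exp (y + x) - Complex.exp (y - x) := by
  rw [Complex.two_sinh, sub_mul, ← Complex.exp_add, ← Complex.exp_add, sub_eq_add_neg y,
    add_comm x, add_comm (-x)]

theorem greenSeries_eq_log_norm {a : ℝ} (ha : 0 < a) {z : ℂ} (hz : z ≠ 0) (hza : z ≠ a)
    (haz : a * z ≠ 1) :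
    greenSeries a z = Real.log ‖(a * z - 1) / (z - a)‖ := by
  set r := Complex.log z
  set l : ℂ := (Real.log a : ℂ)
  have hr : Complex.exp r = z := Complex.exp_log hz
  have hl : Complex.exp l = a := by rw [← ofReal_exp, Real.exp_log ha]
  have hu : 2 * Complex.sinh ((r + l) / 2) * Complex.exp ((r + l) / 2) = a * z - 1 := by
    rw [two_mul_sinh_mul_exp, sub_self, Complex.exp_zero, add_halves, Complex.exp_add, hr, hl,
      mul_comm]
  have hv : 2 * Complex.sinh ((r - l) / 2) * Complex.exp ((r + l) / 2) = z - a := by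
    rw [two_mul_sinh_mul_exp, ← hr, ← hl]
    ring_nf
  have hu0 : Complex.sinh ((r + l) / 2) ≠ 0 := by
    intro h
    simp only [h, mul_zero, zero_mul] at hu
    exact haz (by linear_combination -hu)
  have hv0 : Complex.sinh ((r - l) / 2) ≠ 0 := by
    intro h
    simp only [h, mul_zero, zero_mul] at hv
    exact hza (by linear_combination -hv)
  rw [greenSeries, log_norm_div_add_tsum_eq_log_norm_sinh_div hu0 hv0, ← hu, ← hv,
    mul_div_mul_right _ _ (Complex.exp_ne_zero _), mul_div_mul_left _ _ two_ne_zero]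

theorem harmonicAt_log_norm_mobius {a z : ℂ} (hza : z ≠ a) (haz : a * z ≠ 1) :
    InnerProductSpace.HarmonicAt (fun w ↦ Real.log ‖(a * w - 1) / (w - a)‖) z := by
  have hden : z - a ≠ 0 := sub_ne_zero.2 hza
  refine AnalyticAt.harmonicAt_log_norm ?_ (div_ne_zero (sub_ne_zero.2 haz) hden)
  exact (analyticAt_const.mul analyticAt_id |>.sub analyticAt_const).div
    (analyticAt_id.sub analyticAt_const) hden

theorem HarmonicOn.of_harmonicOnNhd {u : ℂ → ℝ} {s : Set ℂ}
    (h : InnerProductSpace.HarmonicOnNhd u s) : HarmonicOn u s := by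
  refine ⟨h.continuousOn, fun c _ R hR hsub ↦ ?_⟩
  rw [← (h.mono (by rwa [abs_of_pos hR])).circleAverage_eq, circleAverage_def, smul_eq_mul,
    one_div]
  rfl

/-- the series `G` stays bounded as `z → 0`; consequently the
singularity at the origin is removable and `G` extends harmonically
(away from its pole at `a`) to the whole disk. -/
theorem green_series_bounded_near_zero_and_extends
    (a : ℝ) (ha : a ∈ Ioo (0:ℝ) 1) :
    (∃ M : ℝ, ∃ δ > (0:ℝ), ∀ z : ℂ, z ≠ 0 → ‖z‖ < δ → |greenSeries a z| ≤ M) ∧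
    (∃ h : ℂ → ℝ, HarmonicOn h (ball (0:ℂ) 1 \ {(a:ℂ)}) ∧
      ∀ z ∈ ball (0:ℂ) 1 \ {0, (a:ℂ)}, h z = greenSeries a z) := by
  set U := ball (0 : ℂ) 1 \ {(a : ℂ)}
  set φ : ℂ → ℝ := fun w ↦ Real.log ‖(a * w - 1) / (w - a)‖
  have hpole {z : ℂ} (hz : z ∈ ball (0 : ℂ) 1) : (a : ℂ) * z ≠ 1 := by
    intro h
    have : a * ‖z‖ = 1 := by simpa [abs_of_pos ha.1] using congrArg norm h
    nlinarith [mem_ball_zero_iff.1 hz, ha.1, ha.2, norm_nonneg z]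
  have hharm : InnerProductSpace.HarmonicOnNhd φ U := fun z hz ↦
    harmonicAt_log_norm_mobius hz.2 (hpole hz.1)
  have hG {z : ℂ} (hz : z ∈ U) (hz0 : z ≠ 0) : greenSeries a z = φ z :=
    greenSeries_eq_log_norm ha.1 hz0 hz.2 (hpole hz.1)
  have h0U : (0 : ℂ) ∈ U := ⟨mem_ball_self one_pos, by simpa [eq_comm] using ha.1.ne'⟩
  have hnear : ∀ᶠ z in 𝓝 (0 : ℂ), z ∈ U ∧ |φ z| < |φ 0| + 1 :=
    Filter.Eventually.and ((isOpen_ball.sdiff isClosed_singleton).mem_nhds h0U)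
      ((hharm 0 h0U).1.continuousAt.abs.eventually (Iio_mem_nhds (lt_add_one _)))
  obtain ⟨δ, hδ, hball⟩ := Metric.eventually_nhds_iff.1 hnear
  refine ⟨⟨|φ 0| + 1, δ, hδ, fun z hz0 hzδ ↦ ?_⟩, φ, .of_harmonicOnNhd hharm, fun z hz ↦ ?_⟩
  · obtain ⟨hzU, hbound⟩ := hball (by simpa using hzδ)
    exact (hG hzU hz0).symm ▸ hbound.le
  · simp only [Set.mem_sdiff, mem_insert_iff, mem_singleton_iff, not_or] at hz
    exact (hG ⟨hz.1, hz.2.2⟩ hz.2.1).symm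
end
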